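/- Let P be a poset. The set 𝒦(Γ(P)) of pre-C-compact elements of Γ(P) equals the d-closure in Γ(P) of the image of the map η : P → Γ(P), η(x) = ↓x; that is, 𝒦(Γ(P)) is exactly the smallest subfamily of Γ(P) containing every principal ideal ↓x (x ∈ P) and closed under suprema in Γ(P) of directed (under inclusion) subfamilies. -/
import Mathlib


/-- A Scott-closed subset of a poset: a lower set closed under suprema of directed subsets
that exist. -/
def ScottClosed {P : Type*} [Preorder P] (A : Set P) : Prop :=
  IsLowerSet A ∧ ∀ D ⊆ A, D.Nonempty → DirectedOn (· ≤ ·) D →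
    ∀ a : P, IsLUB D a → a ∈ A

/-- The Scott closure: the intersection of all Scott-closed supersets. -/
def scottClosure {P : Type*} [Preorder P] (A : Set P) : Set P :=
  ⋂₀ {C : Set P | ScottClosed C ∧ A ⊆ C}

/-- The supremum of a family of sets in the complete lattice `Γ(P)` of Scott-closed sets:
the Scott closure of its union. -/
def GammaSup {P : Type*} [Preorder P] (𝒞 : Set (Set P)) : Set P :=
  scottClosure (⋃₀ 𝒞)

/-- `𝒟 ∈ ℋ`: `𝒟` is a family of nonempty Scott-closed sets such that `↓a ∈ 𝒟` whenever
`a ∈ A ∈ 𝒟`, and `𝒟` is d-closed: the supremum in `Γ(P)` of any nonempty directed (under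
inclusion) subfamily of `𝒟` belongs to `𝒟`. -/
def MemH {P : Type*} [Preorder P] (𝒟 : Set (Set P)) : Prop :=
  (∀ A ∈ 𝒟, ScottClosed A ∧ A.Nonempty) ∧
  (∀ A ∈ 𝒟, ∀ a ∈ A, Set.Iic a ∈ 𝒟) ∧
  (∀ 𝒞 ⊆ 𝒟, 𝒞.Nonempty → DirectedOn (· ⊆ ·) 𝒞 → GammaSup 𝒞 ∈ 𝒟)

/-- `A` is beneath `B` (`A ≺ B`): for every `𝒟 ∈ ℋ` with `B` contained in the supremum of
`𝒟` in `Γ(P)`, one has `A ∈ 𝒟`. -/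
def Beneath {P : Type*} [Preorder P] (A B : Set P) : Prop :=
  ∀ 𝒟 : Set (Set P), MemH 𝒟 → B ⊆ GammaSup 𝒟 → A ∈ 𝒟

/-- A pre-C-compact element of `Γ(P)`: a Scott-closed set `A` with `A ≺ A`. -/
def PreCCompact {P : Type*} [Preorder P] (A : Set P) : Prop :=
  ScottClosed A ∧ Beneath A A

lemma scottClosed_scottClosure {P : Type*} [Preorder P] (A : Set P) :
    ScottClosed (scottClosure A) := by
  constructor
  · intro x y hyx hx C hC
    exact hC.1.1 hyx (hx C hC)
  · intro D hD hne hdir a ha C hC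
    exact hC.1.2 D (fun d hd => hD hd C hC) hne hdir a ha

lemma subset_scottClosure {P : Type*} [Preorder P] (A : Set P) :
    A ⊆ scottClosure A := fun _ hx C hC => hC.2 hx

lemma scottClosure_subset {P : Type*} [Preorder P] {A C : Set P}
    (hC : ScottClosed C) (h : A ⊆ C) : scottClosure A ⊆ C :=
  fun x hx => hx C ⟨hC, h⟩

lemma scottClosed_Iic {P : Type*} [Preorder P] (x : P) : ScottClosed (Set.Iic x) := by
  refine ⟨fun a b hba ha => le_trans hba ha, ?_⟩
  intro D hD _ _ a ha
  exact ha.2 fun d hd => hD hd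

lemma preCCompact_Iic {P : Type*} [Preorder P] (x : P) : PreCCompact (Set.Iic x) := by
  refine ⟨scottClosed_Iic x, ?_⟩
  intro 𝒟 h𝒟 hsub
  obtain ⟨hscne, hdown, hdcl⟩ := h𝒟
  set S : Set P := {y | Set.Iic y ∈ 𝒟} with hSdef
  have hS : ScottClosed S := by
    constructor
    · intro a b hba ha
      exact hdown _ ha b hba
    · intro D hD hne hdir a ha
      set 𝒞 : Set (Set P) := Set.Iic '' D with h𝒞def
      have h𝒞𝒟 : 𝒞 ⊆ 𝒟 := by
        rintro C ⟨d, hd, rfl⟩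
        exact hD hd
      have h𝒞ne : 𝒞.Nonempty := hne.image _
      have h𝒞dir : DirectedOn (· ⊆ ·) 𝒞 := by
        rintro C₁ ⟨d₁, hd₁, rfl⟩ C₂ ⟨d₂, hd₂, rfl⟩
        obtain ⟨d₃, hd₃, h13, h23⟩ := hdir d₁ hd₁ d₂ hd₂
        exact ⟨Set.Iic d₃, ⟨d₃, hd₃, rfl⟩, Set.Iic_subset_Iic.mpr h13,
          Set.Iic_subset_Iic.mpr h23⟩
      have hmem : GammaSup 𝒞 ∈ 𝒟 := hdcl 𝒞 h𝒞𝒟 h𝒞ne h𝒞dir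
      have heq : GammaSup 𝒞 = Set.Iic a := by
        apply Set.Subset.antisymm
        · refine scottClosure_subset (scottClosed_Iic a) ?_
          rintro y ⟨C, ⟨d, hd, rfl⟩, hy⟩
          exact le_trans hy (ha.1 hd)
        · have hD𝒞 : D ⊆ GammaSup 𝒞 := by
            intro d hd
            exact subset_scottClosure _ ⟨Set.Iic d, ⟨d, hd, rfl⟩, le_refl d⟩
          have hasup : a ∈ GammaSup 𝒞 :=
            (scottClosed_scottClosure _).2 D hD𝒞 hne hdir a ha
          exact fun y hy => (scottClosed_scottClosure _).1 hy hasup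
      show Set.Iic a ∈ 𝒟
      exact heq ▸ hmem
  have hUS : ⋃₀ 𝒟 ⊆ S := by
    rintro y ⟨A, hA, hy⟩
    exact hdown A hA y hy
  have hxS : x ∈ S := scottClosure_subset hS hUS (hsub (le_refl x))
  exact hxS

lemma preCCompact_gammaSup {P : Type*} [Preorder P] {𝒞 : Set (Set P)}
    (hsub : ∀ A ∈ 𝒞, PreCCompact A) (hne : 𝒞.Nonempty) (hdir : DirectedOn (· ⊆ ·) 𝒞) :
    PreCCompact (GammaSup 𝒞) := by
  refine ⟨scottClosed_scottClosure _, ?_⟩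
  intro 𝒟 h𝒟 hGG
  have h𝒞𝒟 : 𝒞 ⊆ 𝒟 := by
    intro A hA
    refine (hsub A hA).2 𝒟 h𝒟 ?_
    intro x hx
    exact hGG (subset_scottClosure _ ⟨A, hA, hx⟩)
  exact h𝒟.2.2 𝒞 h𝒞𝒟 hne hdir

/-- the pre-C-compact elements of `Γ(P)` are exactly the members of the
d-closure of `{↓x : x ∈ P}` in `Γ(P)`, i.e. of the smallest family of sets containing all
principal ideals and closed under suprema in `Γ(P)` of nonempty directed (under inclusion)
subfamilies. -/
theorem preCCompact_eq_dClosure_principals (P : Type*) [PartialOrder P] :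
    {A : Set P | PreCCompact A} =
      ⋂₀ {F : Set (Set P) | (∀ x : P, Set.Iic x ∈ F) ∧
        ∀ 𝒞 ⊆ F, 𝒞.Nonempty → DirectedOn (· ⊆ ·) 𝒞 → GammaSup 𝒞 ∈ F} := by
  ext A
  simp only [Set.mem_setOf_eq, Set.mem_sInter]
  constructor
  · intro hA
    -- `𝒟₀` is the d-closure of the family of principal ideals.
    set 𝒟₀ : Set (Set P) := ⋂₀ {F : Set (Set P) | (∀ x : P, Set.Iic x ∈ F) ∧
        ∀ 𝒞 ⊆ F, 𝒞.Nonempty → DirectedOn (· ⊆ ·) 𝒞 → GammaSup 𝒞 ∈ F} with h𝒟₀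
    have h𝒟₀cond : (∀ x : P, Set.Iic x ∈ 𝒟₀) ∧
        ∀ 𝒞 ⊆ 𝒟₀, 𝒞.Nonempty → DirectedOn (· ⊆ ·) 𝒞 → GammaSup 𝒞 ∈ 𝒟₀ := by
      constructor
      · intro x
        exact fun F hF => hF.1 x
      · intro 𝒞 h𝒞 hne hdir F hF
        exact hF.2 𝒞 (fun B hB => h𝒞 hB F hF) hne hdir
    have hF₁ : 𝒟₀ ⊆ {B : Set P | ScottClosed B ∧ B.Nonempty} := by
      intro B hB
      refine hB _ ⟨fun x => ⟨scottClosed_Iic x, ⟨x, le_refl x⟩⟩, ?_⟩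
      intro 𝒞 h𝒞 hne hdir
      obtain ⟨C, hC⟩ := hne
      obtain ⟨c, hc⟩ := (h𝒞 hC).2
      exact ⟨scottClosed_scottClosure _, ⟨c, subset_scottClosure _ ⟨C, hC, hc⟩⟩⟩
    have hmemH : MemH 𝒟₀ := by
      refine ⟨fun B hB => hF₁ hB, ?_, h𝒟₀cond.2⟩
      intro B _ a _
      exact h𝒟₀cond.1 a
    have hsubG : A ⊆ GammaSup 𝒟₀ := by
      intro x hx
      exact subset_scottClosure _ ⟨Set.Iic x, h𝒟₀cond.1 x, le_refl x⟩
    have := hA.2 𝒟₀ hmemH hsubG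
    intro F hF
    exact this F hF
  · intro h
    exact h {B : Set P | PreCCompact B}
      ⟨fun x => preCCompact_Iic x, fun 𝒞 h𝒞 hne hdir => preCCompact_gammaSup h𝒞 hne hdir⟩
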